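/- arXiv:math/0609489 — 7 statements merged into one kernel-verified Lean document; each statement's English description precedes it below -/
import Mathlib

section
/- Let K be a compact topological space and T : K → 𝒫(K) a map such that (1) for all x ∈ K, T(x) is closed and nonempty, and (2) for all x ∈ K and all y ∈ T(x), T(y) ⊆ T(x). Then for every x ∈ K there exists y ∈ T(x) with y ∈ T(y). -/
/-- Zorn-type fixed point lemma for set-valued maps on a compact space. -/
theorem compact_setvalued_fixed_point {K : Type*} [TopologicalSpace K] [CompactSpace K]
    (T : K → Set K)
    (hclosed : ∀ x, IsClosed (T x)) (hne : ∀ x, (T x).Nonempty)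
    (hmono : ∀ x, ∀ y ∈ T x, T y ⊆ T x) :
    ∀ x : K, ∃ y ∈ T x, y ∈ T y := by
  intro x
  set S : Set (Set K) := {s | ∃ y ∈ T x, s = T y} with hS
  have key : ∀ c ⊆ S, IsChain (· ⊆ ·) c → c.Nonempty → ∃ lb ∈ S, ∀ s ∈ c, lb ⊆ s := by
    intro c hcS hchain hcne
    have hne' : (⋂₀ c).Nonempty := by
      have : Nonempty c := hcne.to_subtype
      apply IsCompact.nonempty_sInter_of_directed_nonempty_isCompact_isClosed
      · intro a ha b hb
        rcases hchain.total ha hb with h | h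
        exacts [⟨a, ha, le_refl _, h⟩, ⟨b, hb, h, le_refl _⟩]
      · intro U hU; obtain ⟨y, _, rfl⟩ := hcS hU; exact hne y
      · intro U hU; obtain ⟨y, _, rfl⟩ := hcS hU; exact (hclosed y).isCompact
      · intro U hU; obtain ⟨y, _, rfl⟩ := hcS hU; exact hclosed y
    obtain ⟨z, hz⟩ := hne'
    obtain ⟨U, hU⟩ := hcne
    obtain ⟨y, hyTx, rfl⟩ := hcS hU
    have hzTx : z ∈ T x := hmono x y hyTx (hz _ hU)
    refine ⟨T z, ⟨z, hzTx, rfl⟩, ?_⟩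
    intro s hs
    obtain ⟨w, hwTx, rfl⟩ := hcS hs
    exact hmono w z (hz _ hs)
  obtain ⟨y0, hy0⟩ := hne x
  obtain ⟨m, -, hmS, hmin⟩ := zorn_superset_nonempty S key (T y0) ⟨y0, hy0, rfl⟩
  obtain ⟨y, hyTx, rfl⟩ := hmS
  obtain ⟨z, hzTy⟩ := hne y
  have hzTx : z ∈ T x := hmono x y hyTx hzTy
  have hsub : T z ⊆ T y := hmono y z hzTy
  have : T z = T y := le_antisymm hsub (hmin ⟨z, hzTx, rfl⟩ hsub)
  exact ⟨z, hzTx, this ▸ hzTy⟩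
end

section
/- Let X be a topological space with a countable basis, F : X → X continuous, g ∈ X, and 𝒜 the set of strictly increasing functions φ : ℕ → ℕ such that F^{φ(n)}(g) → g. Assume 𝒜 is nonempty. Then for any x ∈ X, the set Asymp(x) = {y : ∃ φ ∈ 𝒜, F^{φ(n)}(x) → y} is closed in X. -/
open Filter Topology

/-- `Asymp(x)` is a closed subset of `X`. -/
theorem asymp_isClosed {X : Type*} [TopologicalSpace X] [SecondCountableTopology X]
    (F : X → X) (hF : Continuous F) (g : X)
    (hA : ∃ φ : ℕ → ℕ, StrictMono φ ∧ Tendsto (fun n => F^[φ n] g) atTop (𝓝 g))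
    (x : X) :
    IsClosed {y : X | ∃ φ : ℕ → ℕ, StrictMono φ ∧
      Tendsto (fun n => F^[φ n] g) atTop (𝓝 g) ∧
      Tendsto (fun n => F^[φ n] x) atTop (𝓝 y)} := by
  apply IsSeqClosed.isClosed
  intro ys y hmem hy
  obtain ⟨U, hU⟩ := (𝓝 g).exists_antitone_basis
  obtain ⟨V, hV⟩ := (𝓝 y).exists_antitone_basis
  have claim : ∀ k N : ℕ, ∃ m : ℕ, N < m ∧ F^[m] g ∈ U k ∧ F^[m] x ∈ V k := by
    intro k N
    have hVk : V k ∈ 𝓝 y := hV.1.mem_of_mem trivial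
    have hint : interior (V k) ∈ 𝓝 y := interior_mem_nhds.2 hVk
    obtain ⟨j, hj⟩ := (hy.eventually_mem hint).exists
    obtain ⟨φ, hφmono, hφg, hφx⟩ := hmem j
    have hnb : interior (V k) ∈ 𝓝 (ys j) := isOpen_interior.mem_nhds hj
    have h1 : ∀ᶠ n in atTop, F^[φ n] x ∈ interior (V k) := hφx.eventually_mem hnb
    have h2 : ∀ᶠ n in atTop, F^[φ n] g ∈ U k :=
      hφg.eventually_mem (hU.1.mem_of_mem trivial)
    have h3 : ∀ᶠ n in atTop, N < φ n := by
      filter_upwards [eventually_gt_atTop N] with n hn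
      exact lt_of_lt_of_le hn (hφmono.le_apply)
    obtain ⟨n, hn1, hn2, hn3⟩ := (h1.and (h2.and h3)).exists
    exact ⟨φ n, hn3, hn2, interior_subset hn1⟩
  choose f hf1 hf2 hf3 using claim
  set ψ : ℕ → ℕ := fun k => Nat.rec (f 0 0) (fun k ih => f (k + 1) ih) k with hψ
  have hsucc : ∀ k, ψ (k + 1) = f (k + 1) (ψ k) := fun k => rfl
  have hmono : StrictMono ψ := strictMono_nat_of_lt_succ fun k => by
    rw [hsucc]; exact hf1 (k + 1) (ψ k)
  have hmemg : ∀ k, F^[ψ k] g ∈ U k := by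
    intro k
    cases k with
    | zero => exact hf2 0 0
    | succ k => rw [hsucc]; exact hf2 (k + 1) (ψ k)
  have hmemx : ∀ k, F^[ψ k] x ∈ V k := by
    intro k
    cases k with
    | zero => exact hf3 0 0
    | succ k => rw [hsucc]; exact hf3 (k + 1) (ψ k)
  exact ⟨ψ, hmono, hU.tendsto hmemg, hV.tendsto hmemx⟩
end

section
/- Let X be a topological space with a countable basis, F : X → X continuous, g ∈ X with 𝒜 (the set of extractions φ with F^{φ(n)}(g) → g) nonempty. For any x ∈ X and any y ∈ Asymp(x), it holds that Asymp(y) ⊆ Asymp(x). -/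
open Filter Topology

/-- If `y ∈ Asymp(x)`, then `Asymp(y) ⊆ Asymp(x)`. -/
theorem asymp_trans {X : Type*} [TopologicalSpace X] [SecondCountableTopology X]
    (F : X → X) (hF : Continuous F) (g : X)
    (hA : ∃ φ : ℕ → ℕ, StrictMono φ ∧ Tendsto (fun n => F^[φ n] g) atTop (𝓝 g))
    (x y : X)
    (hy : ∃ φ : ℕ → ℕ, StrictMono φ ∧ Tendsto (fun n => F^[φ n] g) atTop (𝓝 g) ∧
      Tendsto (fun n => F^[φ n] x) atTop (𝓝 y)) :
    {z : X | ∃ φ : ℕ → ℕ, StrictMono φ ∧ Tendsto (fun n => F^[φ n] g) atTop (𝓝 g) ∧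
      Tendsto (fun n => F^[φ n] y) atTop (𝓝 z)} ⊆
    {z : X | ∃ φ : ℕ → ℕ, StrictMono φ ∧ Tendsto (fun n => F^[φ n] g) atTop (𝓝 g) ∧
      Tendsto (fun n => F^[φ n] x) atTop (𝓝 z)} := by
  intro z hz
  obtain ⟨φ, hφm, hφg, hφx⟩ := hy
  obtain ⟨ψ, hψm, hψg, hψy⟩ := hz
  -- antitone neighborhood bases of z and g
  obtain ⟨U, hU⟩ := (𝓝 z).exists_antitone_basis
  obtain ⟨V, hV⟩ := (𝓝 g).exists_antitone_basis
  set U' : ℕ → Set X := fun m => interior (U m) with hU'def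
  set V' : ℕ → Set X := fun m => interior (V m) with hV'def
  have hU'nhds : ∀ m, U' m ∈ 𝓝 z := fun m => interior_mem_nhds.2 (hU.mem m)
  have hV'nhds : ∀ m, V' m ∈ 𝓝 g := fun m => interior_mem_nhds.2 (hV.mem m)
  have hU'open : ∀ m, IsOpen (U' m) := fun m => isOpen_interior
  have hV'open : ∀ m, IsOpen (V' m) := fun m => isOpen_interior
  -- key claim
  have key : ∀ m b : ℕ, ∃ N : ℕ, b < N ∧ F^[N] x ∈ U' m ∧ F^[N] g ∈ V' m := by
    intro m b
    -- choose k with F^[ψ k] y ∈ U' m and F^[ψ k] g ∈ V' m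
    obtain ⟨k, hk1, hk2⟩ :=
      ((hψy.eventually_mem (hU'nhds m)).and (hψg.eventually_mem (hV'nhds m))).exists
    -- F^[ψ k + φ n] x = F^[ψ k] (F^[φ n] x) → F^[ψ k] y
    have hx' : Tendsto (fun n => F^[ψ k + φ n] x) atTop (𝓝 (F^[ψ k] y)) := by
      have : Tendsto (fun n => F^[ψ k] (F^[φ n] x)) atTop (𝓝 (F^[ψ k] y)) :=
        ((hF.iterate (ψ k)).tendsto y).comp hφx
      simpa [Function.iterate_add_apply] using this
    have hg' : Tendsto (fun n => F^[ψ k + φ n] g) atTop (𝓝 (F^[ψ k] g)) := by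
      have : Tendsto (fun n => F^[ψ k] (F^[φ n] g)) atTop (𝓝 (F^[ψ k] g)) :=
        ((hF.iterate (ψ k)).tendsto g).comp hφg
      simpa [Function.iterate_add_apply] using this
    have h1 : ∀ᶠ n in atTop, F^[ψ k + φ n] x ∈ U' m :=
      hx'.eventually_mem ((hU'open m).mem_nhds hk1)
    have h2 : ∀ᶠ n in atTop, F^[ψ k + φ n] g ∈ V' m :=
      hg'.eventually_mem ((hV'open m).mem_nhds hk2)
    have h3 : ∀ᶠ n in atTop, b < ψ k + φ n := by
      filter_upwards [eventually_gt_atTop b] with n hn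
      calc b < n := hn
      _ ≤ φ n := hφm.le_apply
      _ ≤ ψ k + φ n := Nat.le_add_left _ _
    obtain ⟨n, hn1, hn2, hn3⟩ := (h1.and (h2.and h3)).exists
    exact ⟨ψ k + φ n, hn3, hn1, hn2⟩
  choose f hf1 hf2 hf3 using key
  set θ : ℕ → ℕ := fun m => Nat.rec (f 0 0) (fun m prev => f (m + 1) prev) m with hθdef
  have hθsucc : ∀ m, θ (m + 1) = f (m + 1) (θ m) := fun m => rfl
  have hθmono : StrictMono θ := strictMono_nat_of_lt_succ fun n => hf1 (n + 1) (θ n)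
  have hθx : ∀ m, F^[θ m] x ∈ U' m := by
    intro m; cases m with
    | zero => exact hf2 0 0
    | succ m => exact hf2 (m + 1) (θ m)
  have hθg : ∀ m, F^[θ m] g ∈ V' m := by
    intro m; cases m with
    | zero => exact hf3 0 0
    | succ m => exact hf3 (m + 1) (θ m)
  refine ⟨θ, hθmono, ?_, ?_⟩
  · rw [hV.1.tendsto_right_iff]
    intro i _
    filter_upwards [eventually_ge_atTop i] with m hm
    exact hV.antitone hm (interior_subset (hθg m))
  · rw [hU.1.tendsto_right_iff]
    intro i _
    filter_upwards [eventually_ge_atTop i] with m hm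
    exact hU.antitone hm (interior_subset (hθx m))
end

section
/- Let X be a topological space with a countable basis, F : X → X continuous, g ∈ X with 𝒜 nonempty, and K ⊆ X compact with F(K) ⊆ K. Then for every x ∈ K there exist extractions φ, ψ ∈ 𝒜 and x' ∈ K such that F^{φ(n)}(x) → x' and F^{ψ(n)}(x') → x'. -/
open Filter Topology

open Set Function

attribute [local instance] Ultrafilter.add Ultrafilter.addSemigroup

/-- An idempotent ultrafilter on ℕ containing all tails and all return-time sets of `g`. -/
lemma exists_good_idempotent {X : Type*} [TopologicalSpace X] (F : X → X) (hF : Continuous F)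
    (g : X) (hA : ∃ φ : ℕ → ℕ, StrictMono φ ∧ Tendsto (fun n => F^[φ n] g) atTop (𝓝 g)) :
    ∃ p : Ultrafilter ℕ, p + p = p ∧ (∀ m : ℕ, {n | m ≤ n} ∈ p) ∧
      ∀ V ∈ 𝓝 g, {n | F^[n] g ∈ V} ∈ p := by
  obtain ⟨φ, hφ, hφg⟩ := hA
  set s : Set (Ultrafilter ℕ) :=
    {p | (∀ m : ℕ, {n | m ≤ n} ∈ p) ∧ ∀ V ∈ 𝓝 g, {n | F^[n] g ∈ V} ∈ p} with hs
  have hclosed : IsClosed s := by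
    have hrw : s = (⋂ m : ℕ, {p : Ultrafilter ℕ | {n | m ≤ n} ∈ p}) ∩
        ⋂ V ∈ {V : Set X | V ∈ 𝓝 g}, {p : Ultrafilter ℕ | {n | F^[n] g ∈ V} ∈ p} := by
      ext p
      simp only [hs, Set.mem_setOf_eq, Set.mem_inter_iff, Set.mem_iInter]
    rw [hrw]
    exact (isClosed_iInter fun m => ultrafilter_isClosed_basic _).inter
      (isClosed_biInter fun V hV => ultrafilter_isClosed_basic _)
  have hne : s.Nonempty := by
    set f : Filter ℕ := atTop ⊓ Filter.comap (fun n => F^[n] g) (𝓝 g) with hf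
    have hle : Filter.map φ atTop ≤ f := by
      refine le_inf hφ.tendsto_atTop ?_
      rw [← Filter.map_le_iff_le_comap, Filter.map_map]
      exact hφg
    haveI : f.NeBot := neBot_of_le hle
    refine ⟨Ultrafilter.of f, fun m => Ultrafilter.of_le f ?_, fun V hV => Ultrafilter.of_le f ?_⟩
    · exact Filter.le_def.mp inf_le_left _ (mem_atTop m)
    · exact Filter.le_def.mp inf_le_right _ (preimage_mem_comap hV)
  have hadd : ∀ x ∈ s, ∀ y ∈ s, x + y ∈ s := by
    rintro p ⟨hp1, hp2⟩ q ⟨hq1, hq2⟩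
    constructor
    · intro m
      have h : ∀ᶠ a in ↑p, ∀ᶠ b in ↑q, m ≤ a + b := by
        filter_upwards [hp1 m] with a ha
        exact Eventually.of_forall fun b => ha.trans (Nat.le_add_right a b)
      exact (Ultrafilter.eventually_add p q _).mpr h
    · intro V hV
      obtain ⟨U, hUV, hUopen, hgU⟩ := mem_nhds_iff.mp hV
      have h : ∀ᶠ a in ↑p, ∀ᶠ b in ↑q, F^[a + b] g ∈ V := by
        filter_upwards [hp2 U (hUopen.mem_nhds hgU)] with a ha
        have h2 : {b | F^[b] g ∈ F^[a] ⁻¹' U} ∈ q :=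
          hq2 _ ((hUopen.preimage (hF.iterate a)).mem_nhds ha)
        filter_upwards [h2] with b hb
        rw [Function.iterate_add_apply]
        exact hUV hb
      exact (Ultrafilter.eventually_add p q _).mpr h
  obtain ⟨p, hps, hpp⟩ := exists_idempotent_in_compact_add_subsemigroup
    Ultrafilter.continuous_add_left s hne hclosed.isCompact hadd
  exact ⟨p, hpp, hps.1, hps.2⟩

/-- In a compact space, every point has a `p`-limit point which is `p`-recurrent,
for `p` an idempotent ultrafilter. -/
lemma exists_recurrent {Y : Type*} [TopologicalSpace Y] [CompactSpace Y]
    (G : Y → Y) (hG : Continuous G) (p : Ultrafilter ℕ) (hidem : p + p = p) (x : Y) :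
    ∃ z, Tendsto (fun n => G^[n] x) ↑p (𝓝 z) ∧ Tendsto (fun n => G^[n] z) ↑p (𝓝 z) := by
  set T : Y → Set Y := fun y => {z | Tendsto (fun n => G^[n] y) ↑p (𝓝 z)} with hT
  have hTclosed : ∀ y, IsClosed (T y) := by
    intro y
    refine isClosed_of_closure_subset fun z hz => ?_
    have : Tendsto (fun n => G^[n] y) ↑p (𝓝 z) := by
      rw [tendsto_nhds]
      intro U hU hzU
      obtain ⟨w, hwU, hwT⟩ := mem_closure_iff.mp hz U hU hzU
      exact hwT (hU.mem_nhds hwU)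
    exact this
  have hTne : ∀ y, (T y).Nonempty := by
    intro y
    obtain ⟨z, -, hz⟩ := isCompact_univ.ultrafilter_le_nhds (p.map fun n => G^[n] y)
      (by simp)
    refine ⟨z, ?_⟩
    rwa [Ultrafilter.coe_map] at hz
  have htrans : ∀ y y' w, y' ∈ T y → w ∈ T y' → w ∈ T y := by
    intro y y' w hy' hw
    show Tendsto (fun n => G^[n] y) ↑p (𝓝 w)
    rw [← hidem, tendsto_nhds]
    intro U hU hwU
    have houter : ∀ᶠ a in ↑p, ∀ᶠ b in ↑p, G^[a + b] y ∈ U := by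
      filter_upwards [hw (hU.mem_nhds hwU)] with a ha
      have h2 := hy' ((hU.preimage (hG.iterate a)).mem_nhds ha)
      filter_upwards [h2] with b hb
      rw [Function.iterate_add_apply]
      exact hb
    exact (Ultrafilter.eventually_add p p _).mpr houter
  set S : Set (Set Y) := {C | C.Nonempty ∧ IsClosed C ∧ C ⊆ T x ∧
      ∀ y ∈ C, (T y ∩ C).Nonempty} with hSdef
  have hTxS : T x ∈ S := by
    refine ⟨hTne x, hTclosed x, Subset.rfl, fun y hy => ?_⟩
    obtain ⟨w, hw⟩ := hTne y
    exact ⟨w, hw, htrans x y w hy hw⟩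
  have hchain : ∀ c ⊆ S, IsChain (· ⊆ ·) c → c.Nonempty → ∃ lb ∈ S, ∀ s' ∈ c, lb ⊆ s' := by
    intro c hcS hc hcne
    haveI : Nonempty c := hcne.to_subtype
    have hdir : Directed (· ⊇ ·) (fun C : c => (C : Set Y)) := by
      intro i j
      rcases eq_or_ne i j with rfl | hne
      · exact ⟨i, Subset.rfl, Subset.rfl⟩
      rcases hc i.2 j.2 (Subtype.coe_ne_coe.mpr hne) with h | h
      · exact ⟨i, Subset.rfl, h⟩
      · exact ⟨j, h, Subset.rfl⟩
    have h1 : (⋂ C : c, (C : Set Y)).Nonempty :=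
      IsCompact.nonempty_iInter_of_directed_nonempty_isCompact_isClosed _ hdir
        (fun C => (hcS C.2).1) (fun C => (hcS C.2).2.1.isCompact)
        (fun C => (hcS C.2).2.1)
    obtain ⟨C₀, hC₀⟩ := hcne
    refine ⟨⋂₀ c, ⟨?_, ?_, ?_, ?_⟩, fun s' hs' => sInter_subset_of_mem hs'⟩
    · rwa [sInter_eq_iInter]
    · exact isClosed_sInter fun C hC => (hcS hC).2.1
    · exact (sInter_subset_of_mem hC₀).trans (hcS hC₀).2.2.1
    · intro y hy
      have heq : T y ∩ ⋂₀ c = ⋂ C : c, (T y ∩ (C : Set Y)) := by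
        rw [sInter_eq_iInter, inter_iInter]
      rw [heq]
      refine IsCompact.nonempty_iInter_of_directed_nonempty_isCompact_isClosed _
        (hdir.mono_comp _ fun _ _ h => inter_subset_inter_right _ h) (fun C => ?_)
        (fun C => ?_) (fun C => ?_)
      · exact (hcS C.2).2.2.2 y (hy _ C.2)
      · exact ((hTclosed y).inter (hcS C.2).2.1).isCompact
      · exact (hTclosed y).inter (hcS C.2).2.1
  obtain ⟨M, hMTx, hMmin⟩ := zorn_superset_nonempty S hchain (T x) hTxS
  obtain ⟨hMne, hMclosed, hMsubTx, hMrec⟩ := hMmin.prop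
  obtain ⟨z, hzM⟩ := hMne
  have hM'S : T z ∩ M ∈ S := by
    refine ⟨hMrec z hzM, (hTclosed z).inter hMclosed, inter_subset_right.trans hMsubTx,
      fun y hy => ?_⟩
    obtain ⟨w, hwTy, hwM⟩ := hMrec y hy.2
    exact ⟨w, hwTy, htrans z y w hy.1 hwTy, hwM⟩
  have hsub : M ⊆ T z ∩ M := hMmin.2 hM'S inter_subset_right
  exact ⟨z, hMsubTx hzM, (hsub hzM).1⟩

/-- Extract a strictly monotone sequence lying in a given countable family of
ultrafilter sets (the ultrafilter contains all tails). -/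
lemma exists_extraction (p : Ultrafilter ℕ) (htail : ∀ m : ℕ, {n | m ≤ n} ∈ p)
    (S : ℕ → Set ℕ) (hS : ∀ k, S k ∈ p) : ∃ φ : ℕ → ℕ, StrictMono φ ∧ ∀ k, φ k ∈ S k := by
  have key : ∀ b k : ℕ, ∃ n, b < n ∧ n ∈ S k := by
    intro b k
    obtain ⟨n, hn⟩ := Ultrafilter.nonempty_of_mem (inter_mem (htail (b + 1)) (hS k))
    exact ⟨n, hn.1, hn.2⟩
  choose f hf1 hf2 using key
  refine ⟨fun k => Nat.rec (f 0 0) (fun k ih => f ih (k + 1)) k,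
    strictMono_nat_of_lt_succ fun k => hf1 _ _, fun k => ?_⟩
  cases k with
  | zero => exact hf2 0 0
  | succ k => exact hf2 _ _

/-- Dynamical result: every point of a compact invariant set has an asymptotic point
which is asymptotic to itself. -/
theorem exists_self_asymptotic {X : Type*} [TopologicalSpace X] [SecondCountableTopology X]
    (F : X → X) (hF : Continuous F) (g : X)
    (hA : ∃ φ : ℕ → ℕ, StrictMono φ ∧ Tendsto (fun n => F^[φ n] g) atTop (𝓝 g))
    (K : Set X) (hK : IsCompact K) (hFK : Set.MapsTo F K K) :
    ∀ x ∈ K, ∃ (φ ψ : ℕ → ℕ) (x' : X), x' ∈ K ∧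
      StrictMono φ ∧ Tendsto (fun n => F^[φ n] g) atTop (𝓝 g) ∧
      StrictMono ψ ∧ Tendsto (fun n => F^[ψ n] g) atTop (𝓝 g) ∧
      Tendsto (fun n => F^[φ n] x) atTop (𝓝 x') ∧
      Tendsto (fun n => F^[ψ n] x') atTop (𝓝 x') := by
  intro x hx
  obtain ⟨p, hidem, htail, hpg⟩ := exists_good_idempotent F hF g hA
  haveI : CompactSpace K := isCompact_iff_compactSpace.mp hK
  set G : K → K := hFK.restrict F K K with hG
  have hGc : Continuous G := hF.restrict hFK
  have hGiter : ∀ (k : ℕ) (y : K), ((G^[k] y : K) : X) = F^[k] (y : X) := by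
    intro k
    induction k with
    | zero => intro y; simp
    | succ k ih =>
      intro y
      rw [Function.iterate_succ_apply', Function.iterate_succ_apply', ← ih y, hG]
      exact hFK.val_restrict_apply _
  obtain ⟨z, hz1, hz2⟩ := exists_recurrent G hGc p hidem ⟨x, hx⟩
  have hzx : Tendsto (fun n => F^[n] x) ↑p (𝓝 (z : X)) := by
    have h := (continuous_subtype_val.tendsto z).comp hz1
    simpa [Function.comp_def, hGiter] using h
  have hzz : Tendsto (fun n => F^[n] (z : X)) ↑p (𝓝 (z : X)) := by
    have h := (continuous_subtype_val.tendsto z).comp hz2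
    simpa [Function.comp_def, hGiter] using h
  obtain ⟨Vz, hVz⟩ := (𝓝 (z : X)).exists_antitone_basis
  obtain ⟨Vg, hVg⟩ := (𝓝 g).exists_antitone_basis
  have hSx : ∀ k, ({n | F^[n] x ∈ Vz k} ∩ {n | F^[n] g ∈ Vg k}) ∈ p := fun k =>
    inter_mem (hzx (hVz.1.mem_of_mem trivial)) (hpg _ (hVg.1.mem_of_mem trivial))
  have hSz : ∀ k, ({n | F^[n] (z : X) ∈ Vz k} ∩ {n | F^[n] g ∈ Vg k}) ∈ p := fun k =>
    inter_mem (hzz (hVz.1.mem_of_mem trivial)) (hpg _ (hVg.1.mem_of_mem trivial))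
  obtain ⟨φ, hφmono, hφmem⟩ := exists_extraction p htail _ hSx
  obtain ⟨ψ, hψmono, hψmem⟩ := exists_extraction p htail _ hSz
  have hφx : Tendsto (fun k => F^[φ k] x) atTop (𝓝 (z : X)) := by
    rw [hVz.1.tendsto_right_iff]
    intro i _
    filter_upwards [eventually_ge_atTop i] with k hk
    exact hVz.2 hk (hφmem k).1
  have hφg : Tendsto (fun k => F^[φ k] g) atTop (𝓝 g) := by
    rw [hVg.1.tendsto_right_iff]
    intro i _
    filter_upwards [eventually_ge_atTop i] with k hk
    exact hVg.2 hk (hφmem k).2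
  have hψz : Tendsto (fun k => F^[ψ k] (z : X)) atTop (𝓝 (z : X)) := by
    rw [hVz.1.tendsto_right_iff]
    intro i _
    filter_upwards [eventually_ge_atTop i] with k hk
    exact hVz.2 hk (hψmem k).1
  have hψg : Tendsto (fun k => F^[ψ k] g) atTop (𝓝 g) := by
    rw [hVg.1.tendsto_right_iff]
    intro i _
    filter_upwards [eventually_ge_atTop i] with k hk
    exact hVg.2 hk (hψmem k).2
  exact ⟨φ, ψ, (z : X), z.2, hφmono, hφg, hψmono, hψg, hφx, hψz⟩
end

section
/- Let α be an irrational number, let x(i) = ⌊α i⌋ for i ∈ ℤ, and let g(i) = x(i) - x(i-1). Then the sequence g : ℤ → ℤ is quasi-periodic: there exists a strictly increasing φ : ℕ → ℕ with φ(n) → ∞ such that for every i ∈ ℤ, g(i + φ(n)) = g(i) for all sufficiently large n. -/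
open Filter

private lemma fract_def (y : ℝ) : Int.fract y = y - ⌊y⌋ := rfl

private lemma floor_add_of_fract_lt {x y : ℝ} (h : Int.fract y < 1 - Int.fract x) :
    ⌊x + y⌋ = ⌊x⌋ + ⌊y⌋ := by
  have hy : x + y = (x + Int.fract y) + (⌊y⌋ : ℤ) := by
    rw [fract_def]; ring
  rw [hy, Int.floor_add_intCast, add_comm (⌊x⌋) (⌊y⌋), add_comm]
  congr 1
  rw [Int.floor_eq_iff]
  refine ⟨by have := Int.floor_le x; have := Int.fract_nonneg y; linarith, ?_⟩
  have hx : Int.fract x = x - ⌊x⌋ := rfl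
  linarith

private lemma exists_fract_lt (α : ℝ) (hα : Irrational α) {ε : ℝ} (hε : 0 < ε) (hε1 : ε < 1) :
    ∃ d : ℕ, 0 < d ∧ Int.fract (α * d) < ε := by
  have hstep : ∃ d : ℕ, 0 < d ∧ (Int.fract (α * d) < ε ∨ 1 - ε < Int.fract (α * d)) := by
    have hd : Dense ((AddSubgroup.closure ({1, α} : Set ℝ) : Set ℝ)) := by
      rcases (AddSubgroup.closure ({1, α} : Set ℝ)).dense_or_cyclic with h | ⟨a, ha⟩
      · exact h
      · exfalso
        have h1 : (1 : ℝ) ∈ AddSubgroup.closure ({1, α} : Set ℝ) :=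
          AddSubgroup.subset_closure (by simp)
        have h2 : α ∈ AddSubgroup.closure ({1, α} : Set ℝ) :=
          AddSubgroup.subset_closure (by simp)
        rw [ha, AddSubgroup.mem_closure_singleton] at h1 h2
        obtain ⟨k, hk⟩ := h1
        obtain ⟨l, hl⟩ := h2
        rw [zsmul_eq_mul] at hk hl
        have hk0 : (k : ℝ) ≠ 0 := by
          rintro h0
          rw [h0, zero_mul] at hk; exact one_ne_zero hk.symm
        refine (irrational_iff_ne_rational α).mp hα l k (by exact_mod_cast hk0) ?_
        have ha' : a = ((k : ℝ))⁻¹ := eq_inv_of_mul_eq_one_right hk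
        rw [← hl, ha', div_eq_mul_inv]
    obtain ⟨s, hsS, hs0, hsε⟩ := hd.exists_mem_open isOpen_Ioo (Set.nonempty_Ioo.2 hε)
    rw [SetLike.mem_coe, AddSubgroup.mem_closure_pair] at hsS
    obtain ⟨m, n, hmn⟩ := hsS
    rw [zsmul_eq_mul, zsmul_eq_mul, mul_one] at hmn
    have hs1 : s < 1 := lt_trans hsε hε1
    rcases lt_trichotomy n 0 with hn | hn | hn
    · -- α * (-n) = m - s ; fract = 1 - s
      refine ⟨(-n).toNat, by omega, Or.inr ?_⟩
      have hcast : ((((-n).toNat : ℕ) : ℝ)) = -(n : ℝ) := by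
        exact_mod_cast Int.toNat_of_nonneg (by omega : (0:ℤ) ≤ -n)
      rw [hcast]
      have : α * (-(n:ℝ)) = -s + (m : ℤ) := by push_cast; linarith [hmn]
      rw [this, Int.fract_add_intCast, Int.fract_neg, Int.fract_eq_self.mpr ⟨le_of_lt hs0, hs1⟩]
      · linarith
      · rw [Int.fract_eq_self.mpr ⟨le_of_lt hs0, hs1⟩]; exact ne_of_gt hs0
    · exfalso
      rw [hn] at hmn
      push_cast at hmn
      have : (m : ℝ) = s := by linarith
      rcases lt_trichotomy m 0 with h | h | h
      · have : (m : ℝ) < 0 := by exact_mod_cast h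
        linarith
      · rw [h] at this; push_cast at this; linarith
      · have : (1 : ℝ) ≤ (m : ℝ) := by exact_mod_cast h
        linarith
    · refine ⟨n.toNat, by omega, Or.inl ?_⟩
      have hcast : (((n.toNat : ℕ) : ℝ)) = (n : ℝ) := by
        exact_mod_cast Int.toNat_of_nonneg (le_of_lt hn)
      rw [hcast]
      have : α * (n:ℝ) = s + (-m : ℤ) := by push_cast; linarith [hmn]
      rw [this, Int.fract_add_intCast, Int.fract_eq_self.mpr ⟨le_of_lt hs0, hs1⟩]
      exact hsε
  -- Step B: convert near-1 case to near-0 case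
  obtain ⟨d, hd0, hcase⟩ := hstep
  rcases hcase with h | h
  · exact ⟨d, hd0, h⟩
  · set δ : ℝ := 1 - Int.fract (α * d) with hδ
    have hδ0 : 0 < δ := by have := Int.fract_lt_one (α * d); simp [hδ]; linarith
    have hδε : δ < ε := by simp [hδ]; linarith
    have hδ1 : δ < 1 := lt_trans hδε hε1
    set k : ℤ := ⌊1/δ⌋ with hkdef
    have hk1 : 1 ≤ k := by
      rw [hkdef, Int.le_floor]; push_cast
      rw [le_div_iff₀ hδ0]; linarith
    have hkδ : (k : ℝ) * δ ≤ 1 := by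
      have := Int.floor_le (1/δ)
      calc (k:ℝ) * δ ≤ (1/δ) * δ := by
            apply mul_le_mul_of_nonneg_right this (le_of_lt hδ0)
        _ = 1 := by field_simp
    have hkδ' : 1 < ((k:ℝ) + 1) * δ := by
      have := Int.lt_floor_add_one (1/δ)
      calc (1:ℝ) = (1/δ) * δ := by field_simp
        _ < ((k:ℝ)+1) * δ := by
            apply mul_lt_mul_of_pos_right (by push_cast at this ⊢; linarith) hδ0
    refine ⟨k.toNat * d, Nat.mul_pos (by omega) hd0, ?_⟩
    have hkc : ((k.toNat : ℕ) : ℝ) = (k : ℝ) := by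
      exact_mod_cast Int.toNat_of_nonneg (by omega : (0:ℤ) ≤ k)
    have h2 : α * (((k.toNat * d : ℕ)) : ℝ) = -((k:ℝ)*δ) + ((k*⌊α*(d:ℝ)⌋ + k : ℤ):ℝ) := by
      push_cast [hkc]
      rw [hδ, fract_def]
      ring
    rw [h2, Int.fract_add_intCast]
    rcases eq_or_lt_of_le hkδ with heq | hlt
    · rw [heq, show (-1 : ℝ) = ((-1 : ℤ) : ℝ) by norm_num, Int.fract_intCast]
      exact hε
    · have hpos : 0 < (k:ℝ) * δ := by
        have : (1:ℝ) ≤ (k:ℝ) := by exact_mod_cast hk1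
        nlinarith
      rw [Int.fract_neg, Int.fract_eq_self.mpr ⟨le_of_lt hpos, hlt⟩]
      · linarith
      · rw [Int.fract_eq_self.mpr ⟨le_of_lt hpos, hlt⟩]
        exact ne_of_gt hpos

private lemma exists_fract_lt_ge (α : ℝ) (hα : Irrational α) {ε : ℝ} (hε : 0 < ε) (hε1 : ε < 1)
    (N : ℕ) : ∃ m : ℕ, N < m ∧ Int.fract (α * m) < ε := by
  obtain ⟨d, hd0, hdf⟩ := exists_fract_lt α hα
    (show (0:ℝ) < ε / (N+2) by positivity)
    (show ε / (N+2) < 1 by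
      rw [div_lt_one (by positivity)]
      have : (0:ℝ) ≤ (N:ℝ) := Nat.cast_nonneg N
      linarith)
  refine ⟨(N+2)*d, by have := Nat.le_mul_of_pos_right (N+2) hd0; omega, ?_⟩
  have hf0 : 0 ≤ Int.fract (α * d) := Int.fract_nonneg _
  have hNf : ((N:ℝ)+2) * Int.fract (α * d) < ε := by
    rw [lt_div_iff₀ (by positivity : (0:ℝ) < (N:ℝ)+2)] at hdf
    linarith
  have h2 : α * (((N+2)*d : ℕ) : ℝ)
      = ((N:ℝ)+2) * Int.fract (α * d) + (((N+2) * ⌊α * (d:ℝ)⌋ : ℤ) : ℝ) := by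
    push_cast
    rw [fract_def]
    ring
  rw [h2, Int.fract_add_intCast, Int.fract_eq_self.mpr ⟨by positivity, by linarith⟩]
  exact hNf

/-- The gap sequence of `i ↦ ⌊α i⌋` for irrational `α` is quasi-periodic. -/
theorem sturmian_quasiperiodic (α : ℝ) (hα : Irrational α) :
    ∃ φ : ℕ → ℕ, StrictMono φ ∧ Tendsto φ atTop atTop ∧
      ∀ i : ℤ, ∀ᶠ n in atTop,
        (⌊α * (i + φ n : ℤ)⌋ - ⌊α * ((i + φ n : ℤ) - 1)⌋) = (⌊α * i⌋ - ⌊α * (i - 1)⌋) := by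
  have H : ∀ n N : ℕ, ∃ m : ℕ, N < m ∧ Int.fract (α * m) < 1/((n:ℝ)+2) := by
    intro n N
    refine exists_fract_lt_ge α hα (by positivity) ?_ N
    rw [div_lt_one (by positivity)]
    have : (0:ℝ) ≤ (n:ℝ) := Nat.cast_nonneg n
    linarith
  choose F hF1 hF2 using H
  set φ : ℕ → ℕ := fun n => Nat.rec (F 0 0) (fun n ih => F (n+1) ih) n with hφdef
  have hφs : StrictMono φ := strictMono_nat_of_lt_succ (fun n => hF1 (n+1) (φ n))
  have hφf : ∀ n, Int.fract (α * φ n) < 1/((n:ℝ)+2) := by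
    intro n
    cases n with
    | zero => exact hF2 0 0
    | succ n => exact hF2 (n+1) (φ n)
  refine ⟨φ, hφs, hφs.tendsto_atTop, ?_⟩
  intro i
  have ha1 : Int.fract (α * (i:ℝ)) < 1 := Int.fract_lt_one _
  have hb1 : Int.fract (α * ((i:ℝ) - 1)) < 1 := Int.fract_lt_one _
  have htend : Tendsto (fun n : ℕ => 1/((n:ℝ)+2)) atTop (nhds 0) := by
    have := (tendsto_one_div_add_atTop_nhds_zero_nat (𝕜 := ℝ)).comp (tendsto_add_atTop_nat 1)
    convert this using 2 with n
    simp [Function.comp]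
    push_cast
    ring
  have hev := htend.eventually_lt_const
    (lt_min (by linarith : (0:ℝ) < 1 - Int.fract (α * (i:ℝ)))
            (by linarith : (0:ℝ) < 1 - Int.fract (α * ((i:ℝ) - 1))))
  filter_upwards [hev] with n hn
  have h1 : Int.fract (α * (φ n : ℝ)) < 1 - Int.fract (α * (i:ℝ)) :=
    lt_of_lt_of_le (lt_trans (hφf n) hn) (min_le_left _ _)
  have h2 : Int.fract (α * (φ n : ℝ)) < 1 - Int.fract (α * ((i:ℝ) - 1)) :=
    lt_of_lt_of_le (lt_trans (hφf n) hn) (min_le_right _ _)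
  rw [show α * ((i + φ n : ℤ) : ℝ) = α * (i:ℝ) + α * (φ n : ℝ) by push_cast; ring,
      show α * (((i + φ n : ℤ) : ℝ) - 1) = α * ((i:ℝ) - 1) + α * (φ n : ℝ) by push_cast; ring,
      floor_add_of_fract_lt h1, floor_add_of_fract_lt h2]
  ring
end

section
/- Let α be irrational, g(i) = ⌊α i⌋ - ⌊α(i-1)⌋. If φ : ℕ → ℕ is any extraction such that the shifted sequences (g(· + φ(n)))_n converge pointwise to a sequence h : ℤ → ℤ, then h is not periodic. -/
open Filter

/-- Any pointwise limit of shifts of the Sturmian gap sequence is not periodic. -/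
theorem sturmian_limits_not_periodic (α : ℝ) (hα : Irrational α)
    (g : ℤ → ℤ) (hg : g = fun i : ℤ => ⌊α * (i : ℝ)⌋ - ⌊α * ((i : ℝ) - 1)⌋)
    (φ : ℕ → ℕ) (hφ : StrictMono φ) (h : ℤ → ℤ)
    (hlim : ∀ i : ℤ, ∀ᶠ n in atTop, g (i + φ n) = h i) :
    ¬ ∃ T : ℤ, 0 < T ∧ ∀ i : ℤ, h (i + T) = h i := by
  rintro ⟨T, hT, hper⟩
  set Tn := T.toNat with hTndef
  have hTcast : (Tn : ℤ) = T := Int.toNat_of_nonneg hT.le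
  have hTnpos : 0 < Tn := by omega
  set S : ℤ := ∑ j ∈ Finset.range Tn, h (j + 1) with hS
  -- periodicity with multiple periods
  have hperk : ∀ (k : ℕ) (i : ℤ), h (i + k * T) = h i := by
    intro k
    induction k with
    | zero => simp
    | succ k ih =>
      intro i
      have h1 : i + (k + 1 : ℕ) * T = (i + k * T) + T := by push_cast; ring
      rw [h1, hper, ih]
  -- block sums
  have hsumk : ∀ k : ℕ, ∑ j ∈ Finset.range (k * Tn), h (j + 1) = k * S := by
    intro k
    induction k with
    | zero => simp
    | succ k ih =>
      rw [Nat.succ_mul, Finset.sum_range_add, ih]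
      have : ∀ j ∈ Finset.range Tn, h ((k * Tn + j : ℕ) + 1) = h (j + 1) := by
        intro j _
        have : ((k * Tn + j : ℕ) : ℤ) + 1 = ((j : ℤ) + 1) + k * T := by
          push_cast [← hTcast]; ring
        rw [this, hperk]
      rw [Finset.sum_congr rfl this]
      push_cast; ring
  -- key estimate
  have key : ∀ k : ℕ, 0 < k → |((k : ℝ) * S - α * (k * Tn))| < 1 := by
    intro k hk
    set N := k * Tn with hN
    have hev : ∀ᶠ n in atTop, ∀ j ∈ Finset.range N, g ((j : ℤ) + 1 + φ n) = h (j + 1) := by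
      rw [Filter.eventually_all_finset]
      intro j _
      exact hlim ((j : ℤ) + 1)
    obtain ⟨n, hn⟩ := hev.exists
    set m := φ n with hm
    -- telescoping sum of g
    have htel : ∑ j ∈ Finset.range N, g ((j : ℤ) + 1 + m) =
        ⌊α * ((N : ℝ) + m)⌋ - ⌊α * (m : ℝ)⌋ := by
      have heach : ∀ j ∈ Finset.range N,
          g ((j : ℤ) + 1 + m) =
            (fun j : ℕ => ⌊α * ((j : ℝ) + m)⌋) (j + 1) - (fun j : ℕ => ⌊α * ((j : ℝ) + m)⌋) j := by
        intro j _
        simp only [hg]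
        push_cast
        ring_nf
      rw [Finset.sum_congr rfl heach, Finset.sum_range_sub (fun j : ℕ => ⌊α * ((j : ℝ) + m)⌋)]
      push_cast
      ring_nf
    have hsum : ∑ j ∈ Finset.range N, g ((j : ℤ) + 1 + m) = k * S := by
      rw [Finset.sum_congr rfl hn, hsumk]
    have heq : (k : ℤ) * S = ⌊α * ((N : ℝ) + m)⌋ - ⌊α * (m : ℝ)⌋ := by
      rw [← hsum, htel]
    -- floor bounds
    have b1 : (⌊α * ((N : ℝ) + m)⌋ : ℝ) ≤ α * ((N : ℝ) + m) := Int.floor_le _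
    have b2 : α * ((N : ℝ) + m) - 1 < (⌊α * ((N : ℝ) + m)⌋ : ℝ) := Int.sub_one_lt_floor _
    have b3 : (⌊α * (m : ℝ)⌋ : ℝ) ≤ α * (m : ℝ) := Int.floor_le _
    have b4 : α * (m : ℝ) - 1 < (⌊α * (m : ℝ)⌋ : ℝ) := Int.sub_one_lt_floor _
    have hcast : ((k : ℝ) * S) = (⌊α * ((N : ℝ) + m)⌋ : ℝ) - (⌊α * (m : ℝ)⌋ : ℝ) := by
      exact_mod_cast congrArg (fun z : ℤ => (z : ℝ)) heq
    have hNr : (N : ℝ) = (k : ℝ) * Tn := by rw [hN]; push_cast; ring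
    have hNα : α * ((N : ℝ) + m) = α * ((k : ℝ) * Tn) + α * m := by rw [hNr]; ring
    rw [abs_lt]
    constructor <;> linarith
  -- conclude S = T * α
  have hzero : (S : ℝ) - α * Tn = 0 := by
    by_contra hne
    have habs : 0 < |(S : ℝ) - α * Tn| := abs_pos.mpr hne
    obtain ⟨k, hk⟩ := exists_nat_gt (1 / |(S : ℝ) - α * Tn|)
    have hkpos : 0 < k := by
      by_contra hk0
      push_neg at hk0
      interval_cases k
      simp at hk
      exact absurd hk (not_lt.mpr (by positivity))
    have := key k hkpos
    have hkR : (0 : ℝ) < k := by exact_mod_cast hkpos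
    have hfac : (k : ℝ) * S - α * (k * Tn) = k * ((S : ℝ) - α * Tn) := by ring
    rw [hfac, abs_mul, abs_of_pos hkR] at this
    have h1k : 1 / |(S : ℝ) - α * Tn| < k := hk
    have : 1 < k * |(S : ℝ) - α * Tn| := by
      rw [div_lt_iff₀ habs] at h1k
      linarith
    linarith
  have halg : α * Tn = (S : ℝ) := by linarith
  have hirr : Irrational ((Tn : ℤ) * α) := hα.intCast_mul (by omega)
  apply hirr
  refine ⟨(S : ℚ), ?_⟩
  push_cast
  rw [mul_comm]
  exact halg.symm
end

section
/- Boundary data admissibility (Claim): Fix ℓ ∈ (0,1), n ∈ ℕ*, and let Ω_n = (-2n,2n) × (-ℓ,ℓ). For k ∈ ℤ let a_k^± = (k, ±ℓ). Let φ be the function on ∂Ω_n defined by: φ(p) = |p - a_{2k}^±| for p on the horizontal segment [a_{2k-1}^±, a_{2k+1}^±], and φ = 0 on the vertical edges {±2n} × [-ℓ,ℓ]. Let 𝒮 ⊂ (-2n,2n) × {0} be a finite set of points each satisfying |q - a_{2k+1}^+| > 1 for all k ∈ ℤ, with φ = 0 on 𝒮. Then for all distinct p, p' ∈ ∂Ω_n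 ∪ 𝒮: |φ(p) - φ(p')| ≤ |p - p'|, with strict inequality whenever the segment [p,p'] is not contained in ∂Ω_n. -/
/-- Euclidean distance in the plane `ℝ × ℝ`. -/
noncomputable def eucDist (p p' : ℝ × ℝ) : ℝ :=
  Real.sqrt ((p.1 - p'.1) ^ 2 + (p.2 - p'.2) ^ 2)

/-- The boundary of the box `Ω_n = (-2n,2n) × (-ℓ,ℓ)`. -/
def boxBdry (ℓ : ℝ) (n : ℕ) : Set (ℝ × ℝ) :=
  {p | ((p.1 = 2 * n ∨ p.1 = -(2 * n)) ∧ |p.2| ≤ ℓ) ∨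
       ((p.2 = ℓ ∨ p.2 = -ℓ) ∧ |p.1| ≤ 2 * n)}

/-- The boundary data `φ`: on the horizontal edges `y = ±ℓ` it is the distance from the
`x`-coordinate to the nearest even integer (piecewise affine, `0` at `a_{2k}^±` and `1`
at `a_{2k+1}^±`); it vanishes on the vertical edges and at the singular points. -/
noncomputable def bdryData (ℓ : ℝ) (p : ℝ × ℝ) : ℝ :=
  if p.2 = ℓ ∨ p.2 = -ℓ then |p.1 - 2 * round (p.1 / 2)| else 0

/-- The sawtooth `f x = |x - 2 round (x/2)|` is minimized over even integers. -/
lemma saw_le (x : ℝ) (m : ℤ) : |x - 2 * round (x / 2)| ≤ |x - 2 * m| := by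
  have h := round_le (x / 2) m
  have e1 : x - 2 * ((round (x / 2) : ℤ) : ℝ) = 2 * (x / 2 - round (x / 2)) := by ring
  have e2 : x - 2 * (m : ℝ) = 2 * (x / 2 - m) := by ring
  rw [e1, e2, abs_mul, abs_mul, abs_two]
  linarith

lemma saw_le_one (x : ℝ) : |x - 2 * round (x / 2)| ≤ 1 := by
  have h := abs_sub_round (x / 2)
  have e1 : x - 2 * ((round (x / 2) : ℤ) : ℝ) = 2 * (x / 2 - round (x / 2)) := by ring
  rw [e1, abs_mul, abs_two]
  linarith

lemma saw_lip (x y : ℝ) :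
    |(|x - 2 * round (x / 2)|) - (|y - 2 * round (y / 2)|)| ≤ |x - y| := by
  rw [abs_sub_le_iff]
  constructor
  · have h1 : |x - 2 * round (x / 2)| ≤ |x - 2 * round (y / 2)| := saw_le x _
    have h2 : |x - 2 * (round (y / 2) : ℝ)| ≤ |x - y| + |y - 2 * round (y / 2)| := by
      have : x - 2 * (round (y / 2) : ℝ) = (x - y) + (y - 2 * round (y / 2)) := by ring
      rw [this]; exact abs_add_le _ _
    linarith
  · have h1 : |y - 2 * round (y / 2)| ≤ |y - 2 * round (x / 2)| := saw_le y _
    have h2 : |y - 2 * (round (x / 2) : ℝ)| ≤ |x - y| + |x - 2 * round (x / 2)| := by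
      have : y - 2 * (round (x / 2) : ℝ) = -(x - y) + (x - 2 * round (x / 2)) := by ring
      rw [this]
      calc |(-(x - y) + (x - 2 * round (x / 2)))| ≤ |(-(x-y))| + |x - 2 * round (x / 2)| :=
            abs_add_le _ _
        _ = |x - y| + |x - 2 * round (x / 2)| := by rw [abs_neg]
    linarith

/-- Key estimate: if the singular point `q` is far (> 1) from all odd-integer vertices,
then the sawtooth lies strictly below the distance to `(q, 0)`. -/
lemma saw_key (ℓ : ℝ) (hℓ : 0 < ℓ) (q : ℝ)
    (hq : ∀ k : ℤ, Real.sqrt ((q - (2 * k + 1)) ^ 2 + ℓ ^ 2) > 1) (x : ℝ) :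
    |x - 2 * round (x / 2)| < Real.sqrt ((x - q) ^ 2 + ℓ ^ 2) := by
  set m : ℤ := round (x / 2) with hm
  set t : ℝ := x - 2 * m with ht
  set s : ℝ := q - 2 * m with hs
  have htle : |t| ≤ 1 := saw_le_one x
  have h1 : (s - 1) ^ 2 + ℓ ^ 2 > 1 := by
    have h := hq m
    have hA : (0:ℝ) ≤ (q - (2 * m + 1)) ^ 2 + ℓ ^ 2 := by positivity
    have hsq := Real.sq_sqrt hA
    have heq : q - (2 * (m:ℝ) + 1) = s - 1 := by rw [hs]; ring
    rw [heq] at h hsq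
    nlinarith [h, hsq]
  have h2 : (s + 1) ^ 2 + ℓ ^ 2 > 1 := by
    have h := hq (m - 1)
    have hA : (0:ℝ) ≤ (q - (2 * (m - 1 : ℤ) + 1)) ^ 2 + ℓ ^ 2 := by positivity
    have hsq := Real.sq_sqrt hA
    have heq : q - (2 * ((m:ℝ) - 1) + 1) = s + 1 := by rw [hs]; ring
    push_cast at h hA hsq
    rw [heq] at h hsq
    nlinarith [h, hsq]
  have hmain : t ^ 2 < (t - s) ^ 2 + ℓ ^ 2 := by
    rw [abs_le] at htle
    rcases le_or_gt 0 s with hss | hss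
    · nlinarith
    · nlinarith
  have hxq : x - q = t - s := by rw [ht, hs]; ring
  rw [hxq]
  have habs : |t| < Real.sqrt ((t - s) ^ 2 + ℓ ^ 2) := by
    rw [show ((t - s) ^ 2 + ℓ ^ 2) = Real.sqrt ((t - s) ^ 2 + ℓ ^ 2) ^ 2 from
      (Real.sq_sqrt (by positivity)).symm] at hmain
    have h0 : 0 ≤ Real.sqrt ((t - s) ^ 2 + ℓ ^ 2) := Real.sqrt_nonneg _
    nlinarith [abs_nonneg t, sq_abs t]
  exact habs

lemma euc_fst_le (p p' : ℝ × ℝ) : |p.1 - p'.1| ≤ eucDist p p' := by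
  rw [eucDist, ← Real.sqrt_sq_eq_abs]
  exact Real.sqrt_le_sqrt (by nlinarith [sq_nonneg (p.2 - p'.2)])

lemma euc_fst_lt (p p' : ℝ × ℝ) (h : p.2 ≠ p'.2) : |p.1 - p'.1| < eucDist p p' := by
  rw [eucDist, ← Real.sqrt_sq_eq_abs]
  apply Real.sqrt_lt_sqrt (sq_nonneg _)
  have h0 : p.2 - p'.2 ≠ 0 := sub_ne_zero.mpr h
  have : 0 < (p.2 - p'.2) ^ 2 := by positivity
  linarith

lemma euc_pos (p p' : ℝ × ℝ) (h : p ≠ p') : 0 < eucDist p p' := by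
  rw [eucDist]
  apply Real.sqrt_pos.2
  rcases (Prod.ext_iff.not.1 h) with h'
  by_contra hc
  push_neg at hc
  have h1 : (p.1 - p'.1) ^ 2 = 0 := by nlinarith [sq_nonneg (p.1 - p'.1), sq_nonneg (p.2 - p'.2)]
  have h2 : (p.2 - p'.2) ^ 2 = 0 := by nlinarith [sq_nonneg (p.1 - p'.1), sq_nonneg (p.2 - p'.2)]
  apply h'
  constructor
  · have := pow_eq_zero_iff (n := 2) (by norm_num) |>.1 h1; linarith
  · have := pow_eq_zero_iff (n := 2) (by norm_num) |>.1 h2; linarith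

/-- Claim: the boundary data satisfies the admissibility condition
`|φ(p) - φ(p')| ≤ |p - p'|`, with strict inequality whenever the segment `[p,p']`
is not contained in `∂Ω_n`. -/
theorem boundary_data_admissible (ℓ : ℝ) (hℓ : ℓ ∈ Set.Ioo (0:ℝ) 1) (n : ℕ) (hn : 1 ≤ n)
    (S : Finset ℝ)
    (hS : ∀ q ∈ S, q ∈ Set.Ioo (-(2 * n : ℝ)) (2 * n) ∧
      ∀ k : ℤ, Real.sqrt ((q - (2 * k + 1)) ^ 2 + ℓ ^ 2) > 1) :
    ∀ p ∈ boxBdry ℓ n ∪ {p : ℝ × ℝ | p.1 ∈ S ∧ p.2 = 0},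
    ∀ p' ∈ boxBdry ℓ n ∪ {p : ℝ × ℝ | p.1 ∈ S ∧ p.2 = 0}, p ≠ p' →
      |bdryData ℓ p - bdryData ℓ p'| ≤ eucDist p p' ∧
      (¬ segment ℝ p p' ⊆ boxBdry ℓ n → |bdryData ℓ p - bdryData ℓ p'| < eucDist p p') := by
  obtain ⟨hℓ0, hℓ1⟩ := hℓ
  -- helper: a point with y ∈ {ℓ, -ℓ} has |x| ≤ 2n
  have habs : ∀ p ∈ boxBdry ℓ n ∪ {p : ℝ × ℝ | p.1 ∈ S ∧ p.2 = 0},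
      (p.2 = ℓ ∨ p.2 = -ℓ) → |p.1| ≤ 2 * n := by
    rintro p (hp | hp) hy
    · rcases hp with ⟨h1 | h1, _⟩ | ⟨_, h2⟩
      · rw [h1, abs_of_nonneg (by positivity)]
      · rw [h1, abs_neg, abs_of_nonneg (by positivity)]
      · exact h2
    · exfalso
      rcases hy with hy | hy <;> rw [hp.2] at hy <;> linarith
  -- helper: the strict mixed-case estimate
  have hmix : ∀ p ∈ boxBdry ℓ n ∪ {p : ℝ × ℝ | p.1 ∈ S ∧ p.2 = 0},
      ∀ p' ∈ boxBdry ℓ n ∪ {p : ℝ × ℝ | p.1 ∈ S ∧ p.2 = 0},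
      (p.2 = ℓ ∨ p.2 = -ℓ) → ¬(p'.2 = ℓ ∨ p'.2 = -ℓ) →
      |bdryData ℓ p - bdryData ℓ p'| < eucDist p p' := by
    intro p hp p' hp' hy hy'
    rw [bdryData, bdryData, if_pos hy, if_neg hy', sub_zero, abs_abs]
    have hyne : p.2 ≠ p'.2 := by
      intro h; apply hy'; rw [← h]; exact hy
    rcases hp' with hp' | hp'
    · -- p' on a vertical edge: x' = ±2n, an even integer
      rcases hp' with ⟨h1 | h1, _⟩ | ⟨h2, _⟩
      · calc |p.1 - 2 * round (p.1 / 2)| ≤ |p.1 - 2 * (n : ℤ)| := saw_le p.1 n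
          _ = |p.1 - p'.1| := by rw [h1]; norm_num
          _ < eucDist p p' := euc_fst_lt p p' hyne
      · have hle := saw_le p.1 (-n)
        push_cast at hle
        calc |p.1 - 2 * round (p.1 / 2)| ≤ |p.1 - 2 * -(n : ℝ)| := hle
          _ = |p.1 - p'.1| := by rw [h1]; ring_nf
          _ < eucDist p p' := euc_fst_lt p p' hyne
      · exact absurd h2 hy'
    · -- p' a singular point: y' = 0, x' ∈ S
      obtain ⟨hq, hy0⟩ := hp'
      obtain ⟨_, hqk⟩ := hS p'.1 hq
      have key := saw_key ℓ hℓ0 p'.1 hqk p.1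
      have : eucDist p p' = Real.sqrt ((p.1 - p'.1) ^ 2 + ℓ ^ 2) := by
        rw [eucDist, hy0, sub_zero]
        rcases hy with hy | hy <;> rw [hy] <;> ring_nf
      rw [this]
      exact key
  intro p hp p' hp' hne
  by_cases hy : p.2 = ℓ ∨ p.2 = -ℓ
  · by_cases hy' : p'.2 = ℓ ∨ p'.2 = -ℓ
    · -- both on horizontal edges
      have hφ : |bdryData ℓ p - bdryData ℓ p'| ≤ |p.1 - p'.1| := by
        rw [bdryData, bdryData, if_pos hy, if_pos hy']
        exact saw_lip p.1 p'.1
      by_cases hyy : p.2 = p'.2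
      · -- same horizontal line: segment is contained in the boundary
        refine ⟨le_trans hφ (euc_fst_le p p'), ?_⟩
        intro hseg
        exfalso
        apply hseg
        intro z hz
        rw [segment_eq_image] at hz
        obtain ⟨u, ⟨hu0, hu1⟩, hzeq⟩ := hz
        have hz2 : z.2 = p.2 := by
          rw [← hzeq, Prod.snd_add, Prod.smul_snd, Prod.smul_snd, smul_eq_mul, smul_eq_mul,
            ← hyy]; ring
        have hz1 : |z.1| ≤ 2 * n := by
          have h1 : |p.1| ≤ 2 * n := habs p hp hy
          have h2 : |p'.1| ≤ 2 * n := habs p' hp' hy'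
          have : z.1 = (1 - u) * p.1 + u * p'.1 := by
            rw [← hzeq, Prod.fst_add, Prod.smul_fst, Prod.smul_fst, smul_eq_mul, smul_eq_mul]
          rw [this]
          calc |(1 - u) * p.1 + u * p'.1| ≤ |(1 - u) * p.1| + |u * p'.1| := abs_add_le _ _
            _ = (1 - u) * |p.1| + u * |p'.1| := by
                rw [abs_mul, abs_mul, abs_of_nonneg (by linarith), abs_of_nonneg hu0]
            _ ≤ (1 - u) * (2 * n) + u * (2 * n) := by
                apply add_le_add <;> apply mul_le_mul_of_nonneg_left <;> first | linarith | assumption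
            _ = 2 * n := by ring
        right
        constructor
        · rw [hz2]; exact hy
        · exact hz1
      · -- different horizontal lines: always strict
        have hstrict : |bdryData ℓ p - bdryData ℓ p'| < eucDist p p' :=
          lt_of_le_of_lt hφ (euc_fst_lt p p' hyy)
        exact ⟨le_of_lt hstrict, fun _ => hstrict⟩
    · have h := hmix p hp p' hp' hy hy'
      exact ⟨le_of_lt h, fun _ => h⟩
  · by_cases hy' : p'.2 = ℓ ∨ p'.2 = -ℓ
    · have h := hmix p' hp' p hp hy' hy
      rw [abs_sub_comm, show eucDist p p' = eucDist p' p by rw [eucDist, eucDist]; ring_nf]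
      exact ⟨le_of_lt h, fun _ => h⟩
    · -- both have φ = 0
      have h : |bdryData ℓ p - bdryData ℓ p'| < eucDist p p' := by
        rw [bdryData, bdryData, if_neg hy, if_neg hy', sub_zero, abs_zero]
        exact euc_pos p p' hne
      exact ⟨le_of_lt h, fun _ => h⟩
end
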